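/- Let (X, L) be an ω-topological space, g ∈ 𝓛(X, L), and μ an ω-continuous valuation. Define (g·μ)(U) := ∫ χ_U · g dμ for U ∈ L. Then g·μ is an ω-continuous valuation on (X, L), and for every h ∈ 𝓛(X, L), ∫ h d(g·μ) = ∫ h·g dμ. -/

import Mathlib

open scoped ENNReal NNReal

variable {X : Type*}

/-- A lattice of subsets of `X`. -/
def IsLatt (L : Set (Set X)) : Prop :=
  ∅ ∈ L ∧ Set.univ ∈ L ∧ (∀ U ∈ L, ∀ V ∈ L, U ∪ V ∈ L) ∧ (∀ U ∈ L, ∀ V ∈ L, U ∩ V ∈ L)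

/-- An ω-topology: a lattice of subsets closed under countable unions. -/
def IsOmegaTop (L : Set (Set X)) : Prop :=
  IsLatt L ∧ ∀ U : ℕ → Set X, (∀ n, U n ∈ L) → (⋃ n, U n) ∈ L

/-- A valuation on `(X, L)`: strict, monotonic, modular. -/
def IsVal (L : Set (Set X)) (ν : Set X → ℝ≥0∞) : Prop :=
  ν ∅ = 0 ∧ (∀ U ∈ L, ∀ V ∈ L, U ⊆ V → ν U ≤ ν V) ∧
    (∀ U ∈ L, ∀ V ∈ L, ν U + ν V = ν (U ∪ V) + ν (U ∩ V))

/-- ω-continuity of a valuation: it preserves suprema of monotone sequences of sets. -/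
def IsOmegaContVal (L : Set (Set X)) (ν : Set X → ℝ≥0∞) : Prop :=
  ∀ U : ℕ → Set X, (∀ n, U n ∈ L) → Monotone U → ν (⋃ n, U n) = ⨆ n, ν (U n)

/-- `𝓛(X, L)`: maps `h : X → ℝ≥0∞` with `h⁻¹((t,∞]) ∈ L` for all `t ≥ 0`. -/
def MemL (L : Set (Set X)) (h : X → ℝ≥0∞) : Prop :=
  ∀ t : ℝ≥0, {x | (t : ℝ≥0∞) < h x} ∈ L

/-- The improper Riemann integral `∫₀^∞ f(t) dt` of an antitonic map `f : ℝ≥0 → ℝ≥0∞`,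
realized as a Lebesgue integral over `(0, ∞)`. -/
noncomputable def riem (f : ℝ≥0 → ℝ≥0∞) : ℝ≥0∞ :=
  ∫⁻ t in Set.Ioi (0 : ℝ), f t.toNNReal

/-- The Choquet integral `∫ h dν = ∫₀^∞ ν(h⁻¹((t,∞])) dt`. -/
noncomputable def choquet (ν : Set X → ℝ≥0∞) (h : X → ℝ≥0∞) : ℝ≥0∞ :=
  riem fun t => ν {x | (t : ℝ≥0∞) < h x}

/-- The characteristic map of `U`. -/
noncomputable def chi (U : Set X) : X → ℝ≥0∞ :=
  U.indicator fun _ => 1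

/-- `(g·μ)(U) := ∫ χ_U·g dμ`. -/
noncomputable def densMul (g : X → ℝ≥0∞) (μ : Set X → ℝ≥0∞) (U : Set X) : ℝ≥0∞ :=
  choquet μ fun x => chi U x * g x

/-- `(g·μ)(C) = ∫₀^∞ μ(C ∩ g⁻¹((t,∞])) dt`, the explicit formula for the density valuation. -/
noncomputable def densF (g : X → ℝ≥0∞) (μ : Set X → ℝ≥0∞) (C : Set X) : ℝ≥0∞ :=
  riem fun t => μ (C ∩ {x | (t : ℝ≥0∞) < g x})

/-- The smallest algebra of subsets of `X` containing `L`. -/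
def genAlg (L : Set (Set X)) : Set (Set X) :=
  {C | ∀ A : Set (Set X),
    (L ⊆ A ∧ ∅ ∈ A ∧ (∀ S ∈ A, Sᶜ ∈ A) ∧ (∀ S ∈ A, ∀ T ∈ A, S ∪ T ∈ A)) → C ∈ A}

/-- A crescent: a difference of two elements of `L`. -/
def IsCrescent (L : Set (Set X)) (C : Set X) : Prop :=
  ∃ U ∈ L, ∃ V ∈ L, C = U \ V

/-- A signed valuation: strict and modular, real-valued. -/
def IsSignedVal (L : Set (Set X)) (ς : Set X → ℝ) : Prop :=
  ς ∅ = 0 ∧ ∀ U ∈ L, ∀ V ∈ L, ς (U ∪ V) + ς (U ∩ V) = ς U + ς V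

/-- The Hahn decomposition property of a signed valuation `ς` on `(X, L)`: stated via any
signed valuation extending `ς` to the generated algebra (such an extension is unique). -/
def HasHahn (L : Set (Set X)) (ς : Set X → ℝ) : Prop :=
  ∀ ς' : Set X → ℝ, IsSignedVal (genAlg L) ς' → (∀ U ∈ L, ς' U = ς U) →
    ∃ U ∈ L, (∀ C, IsCrescent L C → C ⊆ U → 0 ≤ ς' C) ∧
      (∀ C, IsCrescent L C → Disjoint C U → ς' C ≤ 0)

/-!
Both `f ↦ ∫ f d(g·μ)` and `f ↦ ∫ f·g dμ` are monotone, positively homogeneous, modular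
(`∫ f ⊔ f' + ∫ f ⊓ f' = ∫ f + ∫ f'`) and continuous along increasing sequences, and they agree
on indicators `χ_U`, `U ∈ L`, by the definition of `g·μ`. A step function
`max_{q ∈ S} q·χ_{h > q}` is built by adding one new top step `a` at a time; on `{h > a}` the old
step function is the constant `max S`, so modularity and homogeneity determine the new integral
from the old one and from the integral of `χ_{h > a}`. Hence both functionals agree on step
functions, and letting `S` run through the initial segments of a dense sequence in `ℝ≥0` gives
step functions increasing to `h`. The same three properties, applied to `χ_U·g`, show that `g·μ`
is an ω-continuous valuation.
-/

open Set MeasureTheory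

section Riem

variable {φ ψ : ℝ≥0 → ℝ≥0∞}

lemma measurable_comp_toNNReal_of_antitone (hφ : Antitone φ) :
    Measurable fun t : ℝ => φ t.toNNReal :=
  (hφ.comp_monotone fun _ _ h => Real.toNNReal_mono h).measurable

lemma riem_mono (h : ∀ t, φ t ≤ ψ t) : riem φ ≤ riem ψ :=
  lintegral_mono fun _ => h _

lemma riem_add (hφ : Antitone φ) : riem (fun t => φ t + ψ t) = riem φ + riem ψ :=
  lintegral_add_left (measurable_comp_toNNReal_of_antitone hφ) _

lemma riem_iSup {φ : ℕ → ℝ≥0 → ℝ≥0∞} (hφ : ∀ n, Antitone (φ n)) (hmono : Monotone φ) :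
    riem (fun t => ⨆ n, φ n t) = ⨆ n, riem (φ n) :=
  lintegral_iSup (fun n => measurable_comp_toNNReal_of_antitone (hφ n))
    fun _ _ hmn _ => hmono hmn _

lemma riem_comp_div (hφ : Antitone φ) {c : ℝ≥0} (hc : c ≠ 0) :
    riem (fun t => φ (t / c)) = c * riem φ := by
  have hc' : (c : ℝ) ≠ 0 := NNReal.coe_ne_zero.2 hc
  have hpre : (fun t : ℝ => (c : ℝ)⁻¹ * t) ⁻¹' Ioi 0 = Ioi 0 := by
    ext t
    exact mul_pos_iff_of_pos_left (inv_pos.2 (lt_of_le_of_ne c.2 hc'.symm))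
  calc riem (fun t => φ (t / c))
      = ∫⁻ t in (fun t : ℝ => (c : ℝ)⁻¹ * t) ⁻¹' Ioi 0, φ ((c : ℝ)⁻¹ * t).toNNReal := by
        rw [hpre]
        refine setLIntegral_congr_fun measurableSet_Ioi fun t ht => ?_
        rw [inv_mul_eq_div, Real.toNNReal_div (le_of_lt ht), Real.toNNReal_coe]
    _ = c * riem φ := by
        rw [← setLIntegral_map measurableSet_Ioi (measurable_comp_toNNReal_of_antitone hφ)
          (measurable_const_mul _), Real.map_volume_mul_left (inv_ne_zero hc'),
          Measure.restrict_smul, lintegral_smul_measure, inv_inv, NNReal.abs_eq,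
          ENNReal.ofReal_coe_nnreal, riem, smul_eq_mul]

lemma riem_ite_lt_one (a : ℝ≥0∞) : riem (fun t => if t < 1 then a else 0) = a := by
  have hind : ∀ t ∈ Ioi (0 : ℝ),
      (if t.toNNReal < 1 then a else 0) = (Iio (1 : ℝ)).indicator (fun _ => a) t := by
    intro t ht
    simp [indicator, Real.toNNReal_lt_iff_lt_coe (le_of_lt ht)]
  rw [riem, setLIntegral_congr_fun measurableSet_Ioi hind, lintegral_indicator measurableSet_Iio,
    Measure.restrict_restrict measurableSet_Iio, Iio_inter_Ioi, setLIntegral_const,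
    Real.volume_Ioo]
  norm_num

end Riem

section Choquet

variable {L : Set (Set X)} {ν : Set X → ℝ≥0∞} {f f' g : X → ℝ≥0∞}

lemma IsVal.mono (hν : IsVal L ν) {U V : Set X} (hU : U ∈ L) (hV : V ∈ L) (hUV : U ⊆ V) :
    ν U ≤ ν V :=
  hν.2.1 U hU V hV hUV

lemma antitone_setOf_coe_lt (f : X → ℝ≥0∞) : Antitone fun t : ℝ≥0 => {x | (t : ℝ≥0∞) < f x} :=
  fun _ _ hst _ hx => lt_of_le_of_lt (ENNReal.coe_le_coe.2 hst) hx

lemma ENNReal.coe_lt_coe_mul_iff {c : ℝ≥0} (hc : c ≠ 0) (t : ℝ≥0) (a : ℝ≥0∞) :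
    (t : ℝ≥0∞) < c * a ↔ ((t / c : ℝ≥0) : ℝ≥0∞) < a := by
  rw [ENNReal.coe_div hc, ENNReal.div_lt_iff (Or.inl (by simpa)) (Or.inl ENNReal.coe_ne_top),
    mul_comm]

lemma IsVal.antitone_levelSet (hν : IsVal L ν) (hf : MemL L f) :
    Antitone fun t : ℝ≥0 => ν {x | (t : ℝ≥0∞) < f x} :=
  fun _ _ hst => hν.mono (hf _) (hf _) (antitone_setOf_coe_lt f hst)

lemma MemL.sup (hL : IsLatt L) (hf : MemL L f) (hf' : MemL L f') :
    MemL L fun x => max (f x) (f' x) := by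
  intro t
  simp only [lt_max_iff, ofPred_or]
  exact hL.2.2.1 _ (hf t) _ (hf' t)

lemma MemL.const_mul (hL : IsLatt L) (hf : MemL L f) (c : ℝ≥0) :
    MemL L fun x => c * f x := by
  intro t
  rcases eq_or_ne c 0 with rfl | hc
  · simpa using hL.1
  · simpa only [ENNReal.coe_lt_coe_mul_iff hc] using hf (t / c)

lemma memL_one (hL : IsLatt L) : MemL L fun _ => 1 := by
  intro t
  by_cases ht : (t : ℝ≥0∞) < 1
  · simpa [ht] using hL.2.1
  · simpa [ht] using hL.1

lemma memL_chi_mul (hL : IsLatt L) {U : Set X} (hU : U ∈ L) (hg : MemL L g) :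
    MemL L fun x => chi U x * g x := by
  intro t
  convert hL.2.2.2 _ hU _ (hg t) using 1
  ext x
  by_cases hx : x ∈ U <;> simp [chi, hx]

lemma choquet_mono (hν : IsVal L ν) (hf : MemL L f) (hf' : MemL L f') (hff' : ∀ x, f x ≤ f' x) :
    choquet ν f ≤ choquet ν f' :=
  riem_mono fun t => hν.mono (hf t) (hf' t) fun _ hx => lt_of_lt_of_le hx (hff' _)

lemma choquet_sup_add_inf (hL : IsLatt L) (hν : IsVal L ν) (hf : MemL L f) (hf' : MemL L f') :
    choquet ν (fun x => max (f x) (f' x)) + choquet ν (fun x => min (f x) (f' x)) =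
      choquet ν f + choquet ν f' := by
  rw [choquet, choquet, choquet, choquet,
    ← riem_add (hν.antitone_levelSet (hf.sup hL hf')), ← riem_add (hν.antitone_levelSet hf)]
  congr 1
  funext t
  simp only [lt_max_iff, lt_min_iff, ofPred_or, ofPred_and]
  exact (hν.2.2 _ (hf t) _ (hf' t)).symm

lemma choquet_const_mul (hν : IsVal L ν) (hf : MemL L f) (c : ℝ≥0) :
    choquet ν (fun x => c * f x) = c * choquet ν f := by
  rcases eq_or_ne c 0 with rfl | hc
  · simp [choquet, riem, hν.1]
  · rw [choquet, choquet, ← riem_comp_div (hν.antitone_levelSet hf) hc]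
    simp only [ENNReal.coe_lt_coe_mul_iff hc]

lemma choquet_chi (hν₀ : ν ∅ = 0) (U : Set X) : choquet ν (chi U) = ν U := by
  rw [choquet, ← riem_ite_lt_one (ν U)]
  congr 1 with t
  by_cases ht : t < 1
  · have : ∀ x, (t : ℝ≥0∞) < chi U x ↔ x ∈ U := fun x => by
      by_cases hx : x ∈ U <;> simp [chi, hx, ht]
    simp [this, ht]
  · have : ∀ x, ¬ (t : ℝ≥0∞) < chi U x := fun x => by
      by_cases hx : x ∈ U <;> simp [chi, hx, ht]
    simp [this, ht, hν₀]

lemma choquet_iSup (hν : IsVal L ν) (hνω : IsOmegaContVal L ν) {f : ℕ → X → ℝ≥0∞}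
    (hf : ∀ n, MemL L (f n)) (hmono : Monotone f) :
    choquet ν (fun x => ⨆ n, f n x) = ⨆ n, choquet ν (f n) := by
  have hlevel : ∀ t : ℝ≥0, ν {x | (t : ℝ≥0∞) < ⨆ n, f n x} = ⨆ n, ν {x | (t : ℝ≥0∞) < f n x} :=
    fun t => by
      simp only [lt_iSup_iff, ofPred_exists]
      exact hνω _ (fun n => hf n t) fun _ _ hmn _ hx => lt_of_lt_of_le hx (hmono hmn _)
  rw [choquet, funext hlevel]
  exact riem_iSup (fun n => hν.antitone_levelSet (hf n))
    fun _ _ hmn t => hν.mono (hf _ t) (hf _ t) fun _ hx => lt_of_lt_of_le hx (hmono hmn _)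

end Choquet

section DensMul

variable {L : Set (Set X)} {μ : Set X → ℝ≥0∞} {g : X → ℝ≥0∞}

lemma chi_union_apply (U V : Set X) (x : X) : chi (U ∪ V) x = max (chi U x) (chi V x) := by
  by_cases hU : x ∈ U <;> by_cases hV : x ∈ V <;> simp [chi, hU, hV]

lemma chi_inter_apply (U V : Set X) (x : X) : chi (U ∩ V) x = min (chi U x) (chi V x) := by
  by_cases hU : x ∈ U <;> by_cases hV : x ∈ V <;> simp [chi, hU, hV]

lemma chi_iUnion_apply (U : ℕ → Set X) (x : X) : chi (⋃ n, U n) x = ⨆ n, chi (U n) x :=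
  indicator_iUnion_apply (M := ℝ≥0∞) rfl _ _ _

lemma isVal_densMul (hL : IsLatt L) (hg : MemL L g) (hμ : IsVal L μ) : IsVal L (densMul g μ) := by
  refine ⟨?_, fun U hU V hV hUV => ?_, fun U hU V hV => ?_⟩
  · simp [densMul, chi, choquet, riem, hμ.1]
  · refine choquet_mono hμ (memL_chi_mul hL hU hg) (memL_chi_mul hL hV hg) fun x => ?_
    exact mul_le_mul_left (indicator_le_indicator_of_subset hUV (fun _ => zero_le) x) _
  · simp only [densMul, chi_union_apply, chi_inter_apply, max_mul_of_nonneg _ _ zero_le,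
      min_mul_of_nonneg _ _ zero_le]
    exact (choquet_sup_add_inf hL hμ (memL_chi_mul hL hU hg) (memL_chi_mul hL hV hg)).symm

lemma isOmegaContVal_densMul (hL : IsLatt L) (hg : MemL L g) (hμ : IsVal L μ)
    (hμω : IsOmegaContVal L μ) : IsOmegaContVal L (densMul g μ) := by
  intro U hU hmono
  simp only [densMul, chi_iUnion_apply, ENNReal.iSup_mul]
  exact choquet_iSup hμ hμω (fun n => memL_chi_mul hL (hU n) hg)
    fun _ _ hmn x => mul_le_mul_left (indicator_le_indicator_of_subset (hmono hmn)
      (fun _ => zero_le) x) _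

end DensMul

section StepBelow

variable {L : Set (Set X)} {ν : Set X → ℝ≥0∞} {g h : X → ℝ≥0∞}

noncomputable def stepBelow (h : X → ℝ≥0∞) (S : Finset ℝ≥0) (x : X) : ℝ≥0∞ :=
  S.sup fun q => q * chi {y | (q : ℝ≥0∞) < h y} x

lemma stepBelow_insert [DecidableEq ℝ≥0] (a : ℝ≥0) (s : Finset ℝ≥0) (x : X) :
    stepBelow h (insert a s) x = max (a * chi {y | (a : ℝ≥0∞) < h y} x) (stepBelow h s x) :=
  Finset.sup_insert

lemma stepBelow_mono {S T : Finset ℝ≥0} (hST : S ⊆ T) (x : X) :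
    stepBelow h S x ≤ stepBelow h T x :=
  Finset.sup_mono hST

lemma stepBelow_le (S : Finset ℝ≥0) (x : X) : stepBelow h S x ≤ h x := by
  refine Finset.sup_le fun q _ => ?_
  by_cases hq : (q : ℝ≥0∞) < h x
  · simpa [chi, hq] using hq.le
  · simp [chi, hq]

lemma min_stepBelow {a : ℝ≥0} {s : Finset ℝ≥0} (hs : ∀ q ∈ s, q < a) (x : X) :
    min (stepBelow h s x) (a * chi {y | (a : ℝ≥0∞) < h y} x) =
      (s.sup id : ℝ≥0) * chi {y | (a : ℝ≥0∞) < h y} x := by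
  by_cases hx : (a : ℝ≥0∞) < h x
  · have hstep : stepBelow h s x = (s.sup id : ℝ≥0) := by
      rw [stepBelow, ENNReal.coe_finset_sup]
      refine Finset.sup_congr rfl fun q hq => ?_
      simp [chi, lt_trans (ENNReal.coe_lt_coe.2 (hs q hq)) hx]
    simpa [chi, hx, hstep] using Finset.sup_le fun q hq => (hs q hq).le
  · simp [chi, hx]

lemma memL_stepBelow_mul (hL : IsLatt L) (hh : MemL L h) (hg : MemL L g) (S : Finset ℝ≥0) :
    MemL L fun x => stepBelow h S x * g x := by
  classical
  induction S using Finset.induction_on with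
  | empty => simpa [stepBelow] using (memL_one hL).const_mul hL 0
  | insert a s _ ih =>
    simp only [stepBelow_insert, max_mul_of_nonneg _ _ zero_le, mul_assoc]
    exact (((memL_chi_mul hL (hh a) hg).const_mul hL a)).sup hL ih

lemma mul_choquet_le_choquet_stepBelow_mul (hL : IsLatt L) (hν : IsVal L ν) (hh : MemL L h)
    (hg : MemL L g) {a : ℝ≥0} {S : Finset ℝ≥0} (ha : a ∈ S) :
    a * choquet ν (fun x => chi {y | (a : ℝ≥0∞) < h y} x * g x) ≤
      choquet ν fun x => stepBelow h S x * g x := by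
  rw [← choquet_const_mul hν (memL_chi_mul hL (hh a) hg)]
  refine choquet_mono hν ((memL_chi_mul hL (hh a) hg).const_mul hL a)
    (memL_stepBelow_mul hL hh hg S) fun x => ?_
  rw [← mul_assoc]
  exact mul_le_mul_left (Finset.le_sup (f := fun q : ℝ≥0 => q * chi {y | (q : ℝ≥0∞) < h y} x) ha) _

end StepBelow

section Comparison

variable {L : Set (Set X)} {ν ν₁ ν₂ : Set X → ℝ≥0∞} {g g₁ g₂ h : X → ℝ≥0∞}

lemma choquet_stepBelow_insert_mul [DecidableEq ℝ≥0] (hL : IsLatt L) (hν : IsVal L ν)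
    (hh : MemL L h) (hg : MemL L g) {a : ℝ≥0} {s : Finset ℝ≥0} (hs : ∀ q ∈ s, q < a) :
    choquet ν (fun x => stepBelow h (insert a s) x * g x) +
        (s.sup id : ℝ≥0) * choquet ν (fun x => chi {y | (a : ℝ≥0∞) < h y} x * g x) =
      choquet ν (fun x => stepBelow h s x * g x) +
        a * choquet ν (fun x => chi {y | (a : ℝ≥0∞) < h y} x * g x) := by
  have hχ := memL_chi_mul hL (hh a) hg
  rw [← choquet_const_mul hν hχ, ← choquet_const_mul hν hχ,
    ← choquet_sup_add_inf hL hν (memL_stepBelow_mul hL hh hg s) (hχ.const_mul hL a)]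
  simp only [← mul_assoc, ← max_mul_of_nonneg _ _ zero_le, ← min_mul_of_nonneg _ _ zero_le,
    min_stepBelow hs, stepBelow_insert, max_comm]

lemma choquet_stepBelow_mul_congr (hL : IsLatt L) (hν₁ : IsVal L ν₁) (hν₂ : IsVal L ν₂)
    (hg₁ : MemL L g₁) (hg₂ : MemL L g₂) (hh : MemL L h)
    (hchi : ∀ U ∈ L, choquet ν₁ (fun x => chi U x * g₁ x) = choquet ν₂ (fun x => chi U x * g₂ x))
    (S : Finset ℝ≥0) :
    choquet ν₁ (fun x => stepBelow h S x * g₁ x) =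
      choquet ν₂ (fun x => stepBelow h S x * g₂ x) := by
  classical
  induction S using Finset.induction_on_max with
  | empty => simp [stepBelow, choquet, riem, hν₁.1, hν₂.1]
  | insert a s hs ih =>
    have key₁ := choquet_stepBelow_insert_mul hL hν₁ hh hg₁ hs
    have key₂ := choquet_stepBelow_insert_mul hL hν₂ hh hg₂ hs
    rw [hchi _ (hh a), ih] at key₁
    set D := choquet ν₂ fun x => chi {y | (a : ℝ≥0∞) < h y} x * g₂ x
    by_cases hD : (s.sup id : ℝ≥0) * D = ⊤
    · -- the cancellation below fails, but then both sides dominate `a * D = ⊤`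
      have haD : (a : ℝ≥0∞) * D = ⊤ := top_le_iff.1 <| hD ▸
        mul_le_mul_left (ENNReal.coe_le_coe.2 (Finset.sup_le fun q hq => (hs q hq).le)) D
      have hmem := Finset.mem_insert_self a s
      have h₁ := mul_choquet_le_choquet_stepBelow_mul hL hν₁ hh hg₁ hmem
      have h₂ := mul_choquet_le_choquet_stepBelow_mul hL hν₂ hh hg₂ hmem
      rw [hchi _ (hh a), haD, top_le_iff] at h₁
      rw [haD, top_le_iff] at h₂
      rw [h₁, h₂]
    · exact (ENNReal.add_left_inj hD).1 (key₁.trans key₂.symm)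

end Comparison

section Approximation

variable {L : Set (Set X)} {ν : Set X → ℝ≥0∞} {g h : X → ℝ≥0∞}

noncomputable def denseFinset (n : ℕ) : Finset ℝ≥0 :=
  (Finset.range n).image (TopologicalSpace.denseSeq ℝ≥0)

lemma denseFinset_mono : Monotone denseFinset :=
  fun _ _ hmn => Finset.image_subset_image (Finset.range_subset_range.2 hmn)

lemma iSup_stepBelow_denseFinset (h : X → ℝ≥0∞) (x : X) :
    ⨆ n, stepBelow h (denseFinset n) x = h x := by
  refine le_antisymm (iSup_le fun n => stepBelow_le _ x) (ENNReal.le_of_forall_nnreal_lt ?_)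
  intro r hr
  obtain ⟨c, hrc, hch⟩ := ENNReal.lt_iff_exists_nnreal_btwn.1 hr
  obtain ⟨k, hk⟩ := (TopologicalSpace.denseRange_denseSeq ℝ≥0).exists_mem_open isOpen_Ioo
    (nonempty_Ioo.2 (ENNReal.coe_lt_coe.1 hrc))
  have hmem : TopologicalSpace.denseSeq ℝ≥0 k ∈ denseFinset (k + 1) :=
    Finset.mem_image_of_mem _ (Finset.self_mem_range_succ k)
  have hlt : (TopologicalSpace.denseSeq ℝ≥0 k : ℝ≥0∞) < h x :=
    lt_trans (ENNReal.coe_lt_coe.2 hk.2) hch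
  calc (r : ℝ≥0∞) ≤ TopologicalSpace.denseSeq ℝ≥0 k := ENNReal.coe_le_coe.2 hk.1.le
    _ ≤ stepBelow h (denseFinset (k + 1)) x := by
      refine le_trans ?_ (Finset.le_sup hmem)
      simp [chi, hlt]
    _ ≤ ⨆ n, stepBelow h (denseFinset n) x := le_iSup (fun n => stepBelow h (denseFinset n) x) _

lemma choquet_mul_eq_iSup_stepBelow (hL : IsLatt L) (hν : IsVal L ν) (hνω : IsOmegaContVal L ν)
    (hh : MemL L h) (hg : MemL L g) :
    choquet ν (fun x => h x * g x) =
      ⨆ n, choquet ν fun x => stepBelow h (denseFinset n) x * g x := by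
  rw [← choquet_iSup hν hνω (fun n => memL_stepBelow_mul hL hh hg _)
    fun _ _ hmn x => mul_le_mul_left (stepBelow_mono (denseFinset_mono hmn) x) _]
  simp only [← ENNReal.iSup_mul, iSup_stepBelow_denseFinset]

end Approximation

/-- `g·μ` is an ω-continuous valuation and `∫ h d(g·μ) = ∫ h·g dμ`. -/
theorem stmt10 (L : Set (Set X)) (hL : IsOmegaTop L) (g : X → ℝ≥0∞) (hg : MemL L g)
    (μ : Set X → ℝ≥0∞) (hμ : IsVal L μ) (hμω : IsOmegaContVal L μ) :
    IsVal L (densMul g μ) ∧ IsOmegaContVal L (densMul g μ) ∧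
      ∀ h : X → ℝ≥0∞, MemL L h →
        choquet (densMul g μ) h = choquet μ (fun x => h x * g x) := by
  have hgμ := isVal_densMul hL.1 hg hμ
  have hgμω := isOmegaContVal_densMul hL.1 hg hμ hμω
  refine ⟨hgμ, hgμω, fun h hh => ?_⟩
  have hchi : ∀ U ∈ L, choquet (densMul g μ) (fun x => chi U x * 1) =
      choquet μ (fun x => chi U x * g x) := fun U _ => by
    simp only [mul_one]
    exact choquet_chi hgμ.1 U
  calc choquet (densMul g μ) h = choquet (densMul g μ) (fun x => h x * 1) := by simp only [mul_one]
    _ = ⨆ n, choquet (densMul g μ) fun x => stepBelow h (denseFinset n) x * 1 :=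
      choquet_mul_eq_iSup_stepBelow hL.1 hgμ hgμω hh (memL_one hL.1)
    _ = ⨆ n, choquet μ fun x => stepBelow h (denseFinset n) x * g x :=
      iSup_congr fun n => choquet_stepBelow_mul_congr hL.1 hgμ hμ (memL_one hL.1) hg hh hchi _
    _ = choquet μ (fun x => h x * g x) := (choquet_mul_eq_iSup_stepBelow hL.1 hμ hμω hh hg).symm
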